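/- Let p ≥ 1 and n ≥ 2 be integers and x, y > 0 real numbers. Let Z be the (p+n)×n matrix whose first p rows have all entries equal to x and whose last n rows have all entries equal to y, let Q = A + E be the associated symmetric matrix with diagonal part A, and set q1 = n x + n x², q2 = n y + n y², q3 = (p x + n y) + p x² + n y² (the three distinct diagonal entries of Q). Then the only nonvanishing correction term in the diagonal expansion of det Q is S_{2n+p−3} = −p(n−1)·q1^{p−1}·q2^{n}·q3^{n−2}·(x + x²)² − n(n−1)·q1^{p}·q2^{n−1}·q3^{n−2}·(y + y²)². -/

import Mathlib

/-!
The off-diagonal part `E` of `Q` has zero diagonal and is the weighted adjacency matrix of the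
bipartite graph between the `p + n` row indices and the `n - 1` column indices. So among the
`2 × 2` principal minors entering `S_{N-2}` only those on a row–column pair `{i, j}` survive, and
each equals `-E i j ^ 2 = -(z_i + z_i²)²`, where `z_i ∈ {x, y}` is the value of row `i`. Its
cofactor `∏_{k ≠ i, j} Q k k` is `q1^p q2^n q3^(n-1) / (Q i i · q3)`; summing over the `n - 1`
columns and the `p` rows of `x`'s and `n` rows of `y`'s gives the formula.
-/

/-- The `(m+n−1) × (m+n−1)` symmetric matrix `Q` associated to an `m × n` matrix `Z`. -/
noncomputable def Qmat {m n : ℕ} (z : Fin m → Fin n → ℝ) :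
    Matrix (Fin (m + n - 1)) (Fin (m + n - 1)) ℝ :=
  Matrix.of fun i j =>
    if hi : (i : ℕ) < m then
      if hj : (j : ℕ) < m then
        if i = j then ∑ k : Fin n, (z ⟨i, hi⟩ k + z ⟨i, hi⟩ k ^ 2) else 0
      else
        z ⟨i, hi⟩ ⟨(j : ℕ) - m, by have := j.isLt; omega⟩ ^ 2
          + z ⟨i, hi⟩ ⟨(j : ℕ) - m, by have := j.isLt; omega⟩
    else
      if hj : (j : ℕ) < m then
        z ⟨j, hj⟩ ⟨(i : ℕ) - m, by have := i.isLt; omega⟩ ^ 2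
          + z ⟨j, hj⟩ ⟨(i : ℕ) - m, by have := i.isLt; omega⟩
      else
        if i = j then
          ∑ l : Fin m, (z l ⟨(i : ℕ) - m, by have := i.isLt; omega⟩
            + z l ⟨(i : ℕ) - m, by have := i.isLt; omega⟩ ^ 2)
        else 0

/-- The principal minor of `E` on the index set `T`. -/
noncomputable def principalMinor {N : ℕ} (E : Matrix (Fin N) (Fin N) ℝ)
    (T : Finset (Fin N)) : ℝ :=
  (E.submatrix (T.orderEmbOfFin rfl) (T.orderEmbOfFin rfl)).det

/-- The term `S_k` of the diagonal expansion of `det(A + E)` with `A = diag(a)`. -/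
noncomputable def Sterm {N : ℕ} (a : Fin N → ℝ) (E : Matrix (Fin N) (Fin N) ℝ)
    (k : ℕ) : ℝ :=
  ∑ S ∈ Finset.powersetCard k (Finset.univ : Finset (Fin N)),
    (∏ i ∈ S, a i) * principalMinor E Sᶜ

/-- The `(p+n) × n` matrix whose first `p` rows are constantly `x` and whose last `n`
rows are constantly `y`. -/
def rowZ (p n : ℕ) (x y : ℝ) : Fin (p + n) → Fin n → ℝ :=
  fun i _ => if (i : ℕ) < p then x else y

open Finset

theorem prod_compl_pair_eq_div {ι K : Type*} [Fintype ι] [DecidableEq ι] [CommGroupWithZero K]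
    (a : ι → K) {i j : ι} (hij : i ≠ j) (hi : a i ≠ 0) (hj : a j ≠ 0) :
    ∏ k ∈ {i, j}ᶜ, a k = (∏ k, a k) / (a i * a j) := by
  rw [eq_div_iff (mul_ne_zero hi hj), ← prod_pair hij, prod_compl_mul_prod]

section PrincipalMinors

variable {N : ℕ}

theorem principalMinor_eq_det_submatrix (E : Matrix (Fin N) (Fin N) ℝ) {T : Finset (Fin N)}
    {k : ℕ} (h : #T = k) :
    principalMinor E T = (E.submatrix (T.orderEmbOfFin h) (T.orderEmbOfFin h)).det := by
  subst h
  rfl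

theorem principalMinor_pair (E : Matrix (Fin N) (Fin N) ℝ) {i j : Fin N} (hij : i ≠ j) :
    principalMinor E {i, j} = E i i * E j j - E i j * E j i := by
  wlog hlt : i < j generalizing i j
  · rw [pair_comm, this hij.symm (lt_of_le_of_ne (not_lt.mp hlt) hij.symm)]
    ring
  have h2 : #({i, j} : Finset (Fin N)) = 2 := card_pair hij
  have h0 : ({i, j} : Finset (Fin N)).orderEmbOfFin h2 0 = i := by
    rw [show (0 : Fin 2) = ⟨0, two_pos⟩ from rfl, orderEmbOfFin_zero h2 two_pos]
    simp [min'_insert, hlt.le]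
  have h1 : ({i, j} : Finset (Fin N)).orderEmbOfFin h2 1 = j := by
    rw [show (1 : Fin 2) = ⟨2 - 1, by norm_num⟩ from rfl, orderEmbOfFin_last h2 two_pos]
    simp [max'_insert, hlt.le]
  rw [principalMinor_eq_det_submatrix E h2, Matrix.det_fin_two]
  simp [h0, h1]

theorem Sterm_sub_eq_sum_powersetCard (a : Fin N → ℝ) (E : Matrix (Fin N) (Fin N) ℝ) {k : ℕ}
    (hk : k ≤ N) :
    Sterm a E (N - k) = ∑ T ∈ powersetCard k univ, (∏ i ∈ Tᶜ, a i) * principalMinor E T := by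
  refine sum_nbij' (fun S => Sᶜ) (fun T => Tᶜ) ?_ ?_ (fun S _ => compl_compl S)
    (fun T _ => compl_compl T) (fun S _ => by rw [compl_compl])
  all_goals
    intro S hS
    simp only [mem_powersetCard_univ, card_compl, Fintype.card_fin] at hS ⊢
    omega

theorem Sterm_sub_two_of_bipartite (a : Fin N → ℝ) (E : Matrix (Fin N) (Fin N) ℝ) (hN : 2 ≤ N)
    (R : Finset (Fin N)) (hE : ∀ i j, (i ∈ R ↔ j ∈ R) → E i j = 0) :
    Sterm a E (N - 2) = -∑ i ∈ R, ∑ j ∈ Rᶜ, (∏ k ∈ {i, j}ᶜ, a k) * (E i j * E j i) := by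
  have hpair : ∀ q ∈ R ×ˢ Rᶜ, ({q.1, q.2} : Finset (Fin N)) ∈ powersetCard 2 univ := by
    rintro ⟨i, j⟩ hq
    rw [mem_product, mem_compl] at hq
    exact mem_powersetCard_univ.mpr (card_pair (ne_of_mem_of_not_mem hq.1 hq.2))
  have hinj : Set.InjOn (fun q : Fin N × Fin N => ({q.1, q.2} : Finset (Fin N))) ↑(R ×ˢ Rᶜ) := by
    rintro ⟨i, j⟩ hq ⟨i', j'⟩ hq' h
    simp only [coe_product, coe_compl, Set.mem_prod, Set.mem_compl_iff, mem_coe] at hq hq'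
    replace h : ({i, j} : Finset (Fin N)) = {i', j'} := h
    have hi : i ∈ ({i', j'} : Finset (Fin N)) := h ▸ mem_insert_self i {j}
    have hj : j ∈ ({i', j'} : Finset (Fin N)) := h ▸ mem_insert_of_mem (mem_singleton_self j)
    simp only [mem_insert, mem_singleton] at hi hj
    refine Prod.ext ?_ ?_
    · exact hi.resolve_right fun h => hq'.2 (h ▸ hq.1)
    · exact hj.resolve_left fun h => hq.2 (h ▸ hq'.1)
  have hvanish : ∀ T ∈ powersetCard 2 univ,
      T ∉ (R ×ˢ Rᶜ).image (fun q => ({q.1, q.2} : Finset (Fin N))) →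
        (∏ k ∈ Tᶜ, a k) * principalMinor E T = 0 := by
    intro T hT hTR
    obtain ⟨i, j, hij, rfl⟩ := card_eq_two.mp (mem_powersetCard_univ.mp hT)
    have hsame : i ∈ R ↔ j ∈ R := by
      by_cases hi : i ∈ R <;> by_cases hj : j ∈ R <;> simp only [hi, hj]
      · exact (hTR (mem_image.mpr ⟨(i, j), mem_product.mpr ⟨hi, mem_compl.mpr hj⟩, rfl⟩)).elim
      · exact (hTR (mem_image.mpr ⟨(j, i), mem_product.mpr ⟨hj, mem_compl.mpr hi⟩,
          pair_comm j i⟩)).elim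
    rw [principalMinor_pair E hij, hE i j hsame, hE j i hsame.symm, hE i i Iff.rfl]
    ring
  rw [Sterm_sub_eq_sum_powersetCard a E hN, ← sum_subset (image_subset_iff.mpr hpair) hvanish,
    sum_image hinj, sum_product, ← sum_neg_distrib]
  refine sum_congr rfl fun i hi => ?_
  rw [← sum_neg_distrib]
  refine sum_congr rfl fun j hj => ?_
  rw [principalMinor_pair E (ne_of_mem_of_not_mem hi (mem_compl.mp hj)), hE i i Iff.rfl,
    hE j j Iff.rfl]
  ring

theorem Sterm_sub_two_of_bipartite_of_ne_zero (a : Fin N → ℝ) (E : Matrix (Fin N) (Fin N) ℝ)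
    (hN : 2 ≤ N) (R : Finset (Fin N)) (hE : ∀ i j, (i ∈ R ↔ j ∈ R) → E i j = 0)
    (ha : ∀ i, a i ≠ 0) :
    Sterm a E (N - 2) = -∑ i ∈ R, ∑ j ∈ Rᶜ, (∏ k, a k) / (a i * a j) * (E i j * E j i) := by
  rw [Sterm_sub_two_of_bipartite a E hN R hE]
  refine congrArg Neg.neg (sum_congr rfl fun i hi => sum_congr rfl fun j hj => ?_)
  rw [prod_compl_pair_eq_div a (ne_of_mem_of_not_mem hi (mem_compl.mp hj)) (ha i) (ha j)]

end PrincipalMinors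

@[to_additive]
theorem prod_ite_three_blocks {M : Type*} [CommMonoid M] {N : ℕ} (p n m : ℕ)
    (hN : N = p + n + m) (u v w : M) :
    ∏ k : Fin N, (if (k : ℕ) < p then u else if (k : ℕ) < p + n then v else w)
      = u ^ p * v ^ n * w ^ m := by
  subst hN
  rw [Fin.prod_univ_eq_prod_range (fun k => if k < p then u else if k < p + n then v else w),
    prod_range_add, prod_range_add, prod_eq_pow_card (s := range p) (b := u),
    prod_eq_pow_card (s := range n) (b := v), prod_eq_pow_card (s := range m) (b := w)]
  · simp only [card_range]
  all_goals
    intro k hk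
    rw [mem_range] at hk
    split_ifs <;> first | rfl | omega

theorem sum_filter_val_lt_sum_compl_ite {M : Type*} [AddCommMonoid M] {N : ℕ} (p n m : ℕ)
    (hN : N = p + n + m) (u v : M) :
    ∑ i ∈ ({i | (i : ℕ) < p + n} : Finset (Fin N)),
        ∑ _j ∈ ({i | (i : ℕ) < p + n} : Finset (Fin N))ᶜ, (if (i : ℕ) < p then u else v)
      = m • (p • u + n • v) := by
  have hcard : #({i | (i : ℕ) < p + n} : Finset (Fin N))ᶜ = m := by
    rw [card_compl, Fintype.card_fin, Fin.card_filter_val_lt]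
    omega
  simp only [sum_const, hcard, ← smul_sum, sum_filter]
  have hblocks := sum_ite_three_blocks p n m hN u v (0 : M)
  rw [smul_zero, add_zero] at hblocks
  rw [← hblocks]
  congr 2 with i
  split_ifs <;> first | rfl | omega

theorem Qmat_isSymm {m n : ℕ} (z : Fin m → Fin n → ℝ) : (Qmat z).IsSymm := by
  refine Matrix.IsSymm.ext fun i j => ?_
  simp only [Qmat, Matrix.of_apply]
  split_ifs <;> simp_all [eq_comm]

theorem Qmat_sub_diagonal_apply_eq_zero {m n : ℕ} (z : Fin m → Fin n → ℝ)
    {i j : Fin (m + n - 1)} (h : (i : ℕ) < m ↔ (j : ℕ) < m) :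
    (Qmat z - Matrix.diagonal fun k => Qmat z k k) i j = 0 := by
  obtain rfl | hij := eq_or_ne i j
  · simp
  simp only [Matrix.sub_apply, Matrix.diagonal_apply_ne _ hij, sub_zero, Qmat, Matrix.of_apply]
  split_ifs <;> simp_all

section RowConstant

variable (p n : ℕ) (x y : ℝ)

theorem Qmat_rowZ_diag (i : Fin (p + n + n - 1)) :
    Qmat (rowZ p n x y) i i =
      if (i : ℕ) < p then n * x + n * x ^ 2
      else if (i : ℕ) < p + n then n * y + n * y ^ 2
      else (p * x + n * y) + p * x ^ 2 + n * y ^ 2 := by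
  simp only [Qmat, Matrix.of_apply, rowZ, if_true]
  split_ifs <;> first | omega | (simp [Fin.sum_univ_add] <;> ring)

theorem Qmat_rowZ_sub_diagonal_mul_apply {i j : Fin (p + n + n - 1)} (hi : (i : ℕ) < p + n)
    (hj : p + n ≤ (j : ℕ)) :
    (Qmat (rowZ p n x y) - Matrix.diagonal fun k => Qmat (rowZ p n x y) k k) i j *
        (Qmat (rowZ p n x y) - Matrix.diagonal fun k => Qmat (rowZ p n x y) k k) j i =
      (if (i : ℕ) < p then x + x ^ 2 else y + y ^ 2) ^ 2 := by
  have hij : i ≠ j := fun h => by omega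
  have hQij : Qmat (rowZ p n x y) i j = if (i : ℕ) < p then x + x ^ 2 else y + y ^ 2 := by
    simp only [Qmat, Matrix.of_apply, rowZ, dif_pos hi, dif_neg (not_lt.mpr hj)]
    split_ifs <;> ring
  simp only [Matrix.sub_apply, Matrix.diagonal_apply_ne _ hij, Matrix.diagonal_apply_ne _ hij.symm,
    sub_zero, (Qmat_isSymm (rowZ p n x y)).apply i j, hQij, sq]

end RowConstant

/-- For the row-constant matrix `Z` with diagonal values `q1 = nx + nx²`,
`q2 = ny + ny²`, `q3 = (px + ny) + px² + ny²` of `Q`, the only nonvanishing correction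
term in the diagonal expansion of `det Q` is
`S_{2n+p−3} = −p(n−1) q1^{p−1} q2^{n} q3^{n−2} (x+x²)² − n(n−1) q1^{p} q2^{n−1} q3^{n−2} (y+y²)²`. -/
theorem Sterm_rowConstant_value (p n : ℕ) (hp : 1 ≤ p) (hn : 2 ≤ n)
    (x y : ℝ) (hx : 0 < x) (hy : 0 < y)
    (Q : Matrix (Fin ((p + n) + n - 1)) (Fin ((p + n) + n - 1)) ℝ)
    (hQ : Q = Qmat (rowZ p n x y))
    (E : Matrix (Fin ((p + n) + n - 1)) (Fin ((p + n) + n - 1)) ℝ)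
    (hE : E = Q - Matrix.diagonal (fun i => Q i i))
    (q1 q2 q3 : ℝ)
    (hq1 : q1 = (n : ℝ) * x + (n : ℝ) * x ^ 2)
    (hq2 : q2 = (n : ℝ) * y + (n : ℝ) * y ^ 2)
    (hq3 : q3 = ((p : ℝ) * x + (n : ℝ) * y) + (p : ℝ) * x ^ 2 + (n : ℝ) * y ^ 2) :
    Sterm (fun i => Q i i) E (2 * n + p - 3)
      = -(p : ℝ) * ((n : ℝ) - 1) * q1 ^ (p - 1) * q2 ^ n * q3 ^ (n - 2) * (x + x ^ 2) ^ 2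
        - (n : ℝ) * ((n : ℝ) - 1) * q1 ^ p * q2 ^ (n - 1) * q3 ^ (n - 2)
          * (y + y ^ 2) ^ 2 := by
  obtain ⟨hq1', hq2', hq3'⟩ : q1 ≠ 0 ∧ q2 ≠ 0 ∧ q3 ≠ 0 := by
    subst hq1 hq2 hq3
    refine ⟨?_, ?_, ?_⟩ <;> positivity
  have hdiag : ∀ i, Q i i = if (i : ℕ) < p then q1 else if (i : ℕ) < p + n then q2 else q3 :=
    fun i => by rw [hQ, Qmat_rowZ_diag, ← hq1, ← hq2, ← hq3]
  have hQne : ∀ i, Q i i ≠ 0 := fun i => by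
    rw [hdiag]
    split_ifs <;> assumption
  have hP : ∏ i, Q i i = q1 ^ p * q2 ^ n * q3 ^ (n - 1) := by
    simp_rw [hdiag]
    exact prod_ite_three_blocks p n (n - 1) (by omega) q1 q2 q3
  set R : Finset (Fin (p + n + n - 1)) := {i | (i : ℕ) < p + n}
  have hzero : ∀ i j, (i ∈ R ↔ j ∈ R) → E i j = 0 := fun i j h => by
    rw [hE, hQ]
    exact Qmat_sub_diagonal_apply_eq_zero _ (by simpa [R] using h)
  have hterm : ∀ i ∈ R, ∀ j ∈ Rᶜ, (∏ k, Q k k) / (Q i i * Q j j) * (E i j * E j i) =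
      if (i : ℕ) < p then q1 ^ p * q2 ^ n * q3 ^ (n - 1) / (q1 * q3) * (x + x ^ 2) ^ 2
      else q1 ^ p * q2 ^ n * q3 ^ (n - 1) / (q2 * q3) * (y + y ^ 2) ^ 2 := by
    intro i hi j hj
    simp only [R, mem_compl, mem_filter, mem_univ, true_and, not_lt] at hi hj
    rw [hE, hQ, Qmat_rowZ_sub_diagonal_mul_apply p n x y hi hj, ← hQ, hP, hdiag i, hdiag j,
      if_neg (show ¬(j : ℕ) < p by omega), if_neg (not_lt.mpr hj), if_pos hi]
    split_ifs <;> rfl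
  rw [show 2 * n + p - 3 = p + n + n - 1 - 2 by omega,
    Sterm_sub_two_of_bipartite_of_ne_zero _ E (by omega) R hzero hQne,
    sum_congr rfl fun i hi => sum_congr rfl (hterm i hi),
    sum_filter_val_lt_sum_compl_ite p n (n - 1) (by omega)]
  obtain ⟨p, rfl⟩ : ∃ p', p = p' + 1 := ⟨p - 1, by omega⟩
  obtain ⟨n, rfl⟩ : ∃ n', n = n' + 2 := ⟨n - 2, by omega⟩
  simp only [nsmul_eq_mul, Nat.add_sub_cancel, Nat.cast_add, Nat.cast_one, Nat.cast_ofNat,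
    show n + 2 - 1 = n + 1 by omega]
  field_simp
  ring
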